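/- arXiv:math/9905086 — 2 statements merged into one kernel-verified Lean document; each statement's English description precedes it below -/
import Mathlib

section
/- The q-Serre relation (plus case) of U_q(osp(1,2)^) degenerates at q = 1 to the classical Serre relation of osp(1,2)^: in the free associative algebra over the field ℚ(z₁,z₂,z₃) on three generators x₁, x₂, x₃, each of the four coefficient rational functions below is regular at q = 1, and the element [(z₃−z₁q^{−1})(z₃−z₁q³)(z₁−z₂q²)/(z₃−z₁q)]·x₃x₁x₂ + [(z₂−z₁q²)(z₂−z₁q^{−1})(z₃−z₁q^{−1})(z₃−z₁q³)/((z₁−z₂q^{−1})(z₃−z₁q))]·x₃x₂x₁ − [(z₁−z₃q²)(z₁−z₃q)(z₁q−z₃q^{−1})(z₁−z₂q²)/((z₁−z₃)(z₃−z₁q²))]·x₁x₂x₃ − [(z₁−z₃q²)(z₁−z₃q)(z₁q−z₃q^{−1})(z₂−z₁q²)(z₂−z₁q^{−1})/((z₁−z₃)(z₃−z₁q²)(z₁−z₂q^{−1}))]·x₂x₁x₃, with all coefficients evaluated at q = 1, equals (z₃−z₁)(z₁−z₂)·( x₃(x₁x₂+x₂x₁) − (x₁x₂+x₂x₁)x₃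 ). -/
/-- The field `ℚ(z₁, z₂, z₃)` of rational functions over `ℚ` in three variables. -/
abbrev F3 : Type := FractionRing (MvPolynomial (Fin 3) ℚ)

/-- The variables `z₁, z₂, z₃` of `ℚ(z₁, z₂, z₃)` (0-based: `zv 0 = z₁`, etc.). -/
noncomputable def zv (i : Fin 3) : F3 :=
  algebraMap (MvPolynomial (Fin 3) ℚ) F3 (MvPolynomial.X i)

/-- The free associative unital algebra `F⟨x₁, x₂, x₃⟩` over `F = ℚ(z₁, z₂, z₃)`. -/
abbrev A3 : Type := FreeAlgebra F3 (Fin 3)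

/-- The generators `x₁, x₂, x₃` of the free algebra (0-based: `xg 0 = x₁`, etc.). -/
noncomputable def xg (i : Fin 3) : A3 := FreeAlgebra.ι F3 i

lemma zv_sub_ne_zero {i j : Fin 3} (h : i ≠ j) : zv i - zv j ≠ 0 := by
  rw [sub_ne_zero, zv, zv]
  intro hEq
  exact h (MvPolynomial.X_injective
    (IsFractionRing.injective (MvPolynomial (Fin 3) ℚ) F3 hEq))

/-- the q-Serre relation (plus case) of `U_q(osp(1,2)^)` degenerates at
`q = 1` to the classical Serre relation of `osp(1,2)^`: the four denominators
`(z₃−z₁q)`, `(z₁−z₂q⁻¹)`, `(z₁−z₃)`, `(z₃−z₁q²)` are nonzero at `q = 1` (so the four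
coefficient rational functions are regular at `q = 1`), and the q-Serre combination with
all coefficients evaluated at `q = 1` equals
`(z₃−z₁)(z₁−z₂)·(x₃{x₁,x₂} − {x₁,x₂}x₃)`. -/
theorem qSerre_plus_degenerates_to_classical_Serre :
    (letI q : F3 := 1;
      zv 2 - zv 0 * q ≠ 0 ∧ zv 0 - zv 1 * q⁻¹ ≠ 0 ∧ zv 0 - zv 2 ≠ 0 ∧
        zv 2 - zv 0 * q ^ 2 ≠ 0) ∧
    (letI q : F3 := 1;
      ((zv 2 - zv 0 * q⁻¹) * (zv 2 - zv 0 * q ^ 3) * (zv 0 - zv 1 * q ^ 2) /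
          (zv 2 - zv 0 * q)) • (xg 2 * xg 0 * xg 1)
      + ((zv 1 - zv 0 * q ^ 2) * (zv 1 - zv 0 * q⁻¹) * (zv 2 - zv 0 * q⁻¹) *
            (zv 2 - zv 0 * q ^ 3) /
          ((zv 0 - zv 1 * q⁻¹) * (zv 2 - zv 0 * q))) • (xg 2 * xg 1 * xg 0)
      - ((zv 0 - zv 2 * q ^ 2) * (zv 0 - zv 2 * q) * (zv 0 * q - zv 2 * q⁻¹) *
            (zv 0 - zv 1 * q ^ 2) /
          ((zv 0 - zv 2) * (zv 2 - zv 0 * q ^ 2))) • (xg 0 * xg 1 * xg 2)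
      - ((zv 0 - zv 2 * q ^ 2) * (zv 0 - zv 2 * q) * (zv 0 * q - zv 2 * q⁻¹) *
            (zv 1 - zv 0 * q ^ 2) * (zv 1 - zv 0 * q⁻¹) /
          ((zv 0 - zv 2) * (zv 2 - zv 0 * q ^ 2) * (zv 0 - zv 1 * q⁻¹))) •
        (xg 1 * xg 0 * xg 2)
      = ((zv 2 - zv 0) * (zv 0 - zv 1)) •
          (xg 2 * (xg 0 * xg 1 + xg 1 * xg 0) -
            (xg 0 * xg 1 + xg 1 * xg 0) * xg 2)) := by
  have h20 : zv 2 - zv 0 ≠ 0 := zv_sub_ne_zero (by decide)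
  have h01 : zv 0 - zv 1 ≠ 0 := zv_sub_ne_zero (by decide)
  have h02 : zv 0 - zv 2 ≠ 0 := zv_sub_ne_zero (by decide)
  refine ⟨⟨by simpa using h20, by simpa using h01, h02, by simpa using h20⟩, ?_⟩
  simp only [inv_one, one_pow, mul_one]
  have c : F3 := (zv 2 - zv 0) * (zv 0 - zv 1)
  have e1 : (zv 2 - zv 0) * (zv 2 - zv 0) * (zv 0 - zv 1) / (zv 2 - zv 0)
      = (zv 2 - zv 0) * (zv 0 - zv 1) := by
    field_simp
  have e2 : (zv 1 - zv 0) * (zv 1 - zv 0) * (zv 2 - zv 0) * (zv 2 - zv 0) /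
      ((zv 0 - zv 1) * (zv 2 - zv 0)) = (zv 2 - zv 0) * (zv 0 - zv 1) := by
    field_simp; ring
  have e3 : (zv 0 - zv 2) * (zv 0 - zv 2) * (zv 0 - zv 2) * (zv 0 - zv 1) /
      ((zv 0 - zv 2) * (zv 2 - zv 0)) = (zv 2 - zv 0) * (zv 0 - zv 1) := by
    field_simp; ring
  have e4 : (zv 0 - zv 2) * (zv 0 - zv 2) * (zv 0 - zv 2) * (zv 1 - zv 0) * (zv 1 - zv 0) /
      ((zv 0 - zv 2) * (zv 2 - zv 0) * (zv 0 - zv 1)) = (zv 2 - zv 0) * (zv 0 - zv 1) := by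
    field_simp; ring
  rw [e1, e2, e3, e4]
  rw [← smul_add, ← smul_sub, ← smul_sub]
  congr 1
  noncomm_ring
end

section
/- The Serre relation for the odd currents of the affine Lie superalgebra osp(1,2)^ is not a consequence of the quadratic current relation: there exist a unital associative ℚ-algebra A and a family of elements e : ℤ → A satisfying e_{m+1}e_n + e_n e_{m+1} = e_m e_{n+1} + e_{n+1}e_m for all m, n ∈ ℤ (the mode form of the relation (z−w)E(z)E(w) = (w−z)E(w)E(z)), for which the Serre relation fails, i.e. there exist k, m, n ∈ ℤ with e_k(e_m e_n + e_n e_m) ≠ (e_m e_n + e_n e_m)e_k. -/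
/-- the Serre relation for the odd currents of the affine Lie superalgebra
`osp(1,2)^` is not a consequence of the quadratic current relation: there exist a unital
associative `ℚ`-algebra `A` and a family `e : ℤ → A` satisfying the mode relations
`e_{m+1} e_n + e_n e_{m+1} = e_m e_{n+1} + e_{n+1} e_m` for all `m n : ℤ` (the mode form
of `(z−w)E(z)E(w) = (w−z)E(w)E(z)`), for which the Serre relation fails: there are
`k m n : ℤ` with `e_k (e_m e_n + e_n e_m) ≠ (e_m e_n + e_n e_m) e_k`. -/
theorem serre_not_implied_by_quadratic_relation :
    ∃ (A : Type) (_ : Ring A) (_ : Algebra ℚ A) (e : ℤ → A),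
      (∀ m n : ℤ,
        e (m + 1) * e n + e n * e (m + 1) = e m * e (n + 1) + e (n + 1) * e m) ∧
      ∃ k m n : ℤ,
        e k * (e m * e n + e n * e m) ≠ (e m * e n + e n * e m) * e k := by
  refine ⟨Matrix (Fin 2) (Fin 2) ℚ, inferInstance, inferInstance,
    fun n => !![1, (n : ℚ); 0, 0], ?_, 1, 0, 0, ?_⟩
  · intro m n
    ext i j
    fin_cases i <;> fin_cases j <;>
      simp [Matrix.mul_apply, Fin.sum_univ_two] <;> push_cast <;> ring
  · intro h
    have := congrFun (congrFun h 0) 1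
    simp [Matrix.mul_apply, Fin.sum_univ_two] at this
    norm_num at this
end
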